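/- Let P, I be n×n matrices with entries in ℝ ∪ {-∞} such that P_{jj} ≠ -∞ for every index j, and let S = S({p}, {i}, ⌊n/2⌋). Then G(P ⊕ I) ∈ Γ (equivalently, the multi-precedence graph G(P, I) contains no circuit with positive weight) if and only if G(μ({p} · S^*)) ∈ Γ and G(μ({i} · S^*)) ∈ Γ. -/

import Mathlib

open scoped Classical

namespace NCP

/-- Square max-plus matrices over the extended reals. -/
abbrev MPMat (n : ℕ) := Fin n → Fin n → EReal

/-- Max-plus matrix product: `(A ⊗ B) i j = ⨆ k, A i k + B k j`. -/
noncomputable def mpMul {n : ℕ} (A B : MPMat n) : MPMat n :=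
  fun i j => ⨆ k : Fin n, A i k + B k j

/-- Max-plus identity matrix `E_⊗`. -/
noncomputable def mpId {n : ℕ} : MPMat n :=
  fun i j => if i = j then 0 else ⊥

/-- Max-plus matrix powers. -/
noncomputable def mpPow {n : ℕ} (A : MPMat n) : ℕ → MPMat n
  | 0 => mpId
  | k + 1 => mpMul A (mpPow A k)

/-- Entrywise Kleene star `(A^*) i j = ⨆ k, (A^k) i j`. -/
noncomputable def mpStar {n : ℕ} (A : MPMat n) : MPMat n :=
  fun i j => ⨆ k : ℕ, mpPow A k i j

/-- Entrywise max of two matrices, `A ⊕ B`. -/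
noncomputable def mpAdd {n : ℕ} (A B : MPMat n) : MPMat n :=
  fun i j => max (A i j) (B i j)

/-- `G(A) ∈ Γ`: all diagonal entries of all positive powers are ≤ 0. -/
def InGamma {n : ℕ} (A : MPMat n) : Prop :=
  ∀ i : Fin n, ∀ k : ℕ, 1 ≤ k → mpPow A k i i ≤ 0

/-- `λA`: the matrix with entries `λ + A i j`. -/
noncomputable def sm {n : ℕ} (lam : ℝ) (A : MPMat n) : MPMat n :=
  fun i j => (lam : EReal) + A i j

/-- Division of an extended real by a natural number (±∞ map to ±∞). -/
noncomputable def edivNat (x : EReal) (k : ℕ) : EReal :=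
  if x = ⊤ then ⊤ else if x = ⊥ then ⊥ else ((x.toReal / k : ℝ) : EReal)

/-- The maximum circuit mean of a max-plus matrix. -/
noncomputable def mcm {n : ℕ} (M : MPMat n) : EReal :=
  ⨆ k ∈ Finset.Icc 1 n, ⨆ i : Fin n, edivNat (mpPow M k i i) k

/-- Morphism from words to max-plus matrices determined by `f` on letters. -/
noncomputable def wordMat {α : Type*} {n : ℕ} (f : α → MPMat n) : List α → MPMat n
  | [] => mpId
  | z :: s => mpMul (f z) (wordMat f s)

/-- Entrywise extension of `wordMat` to languages: `μ(L) i j = ⨆ s ∈ L, μ(s) i j`. -/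
noncomputable def langMat {α : Type*} {n : ℕ} (f : α → MPMat n) (L : Language α) : MPMat n :=
  fun i j => ⨆ s ∈ L, wordMat f s i j

/-- The recursive sequence of languages `S(L₁, L₂, k)`. -/
def SL {α : Type*} (L1 L2 : Language α) : ℕ → Language α
  | 0 => 1
  | k + 1 => L1 * SL L1 L2 k * SL L1 L2 k * L2 + L2 * SL L1 L2 k * SL L1 L2 k * L1 + 1


/-- The morphism on the two-letter alphabet `{p, i}` (encoded as `{true, false}`)
sending `p` to `P` and `i` to `I`. -/
noncomputable def mu2 {n : ℕ} (P I : MPMat n) : Bool → MPMat n :=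
  fun z => if z then P else I

/-!
A positive circuit of `P ⊕ I` yields one of length at most `n`: split it at a repeated vertex,
and one of the two shorter circuits is still positive. Let `e` be its number of `p`-arcs minus
its number of `i`-arcs. If `e > 0`, by the cycle lemma some rotation has all nonempty prefixes
of positive excess; cutting it after the last prefix at each level writes its word as a product
of `e` words `p B` with `B` balanced of length at most `n`. Every balanced word `w` is a product
of two words of `S(|w|/2)`, so the circuit contributes to a diagonal entry of `μ({p}·S^*)^e`,
which is `≤ 0`. The case `e < 0` is the same with `i`. If `e = 0`, prepend the loop
`P_jj ≠ -∞` and repeat the circuit `m` times: the word `p w^m` lies in `{p}·S^*` and has weight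
`P_jj + m ω > 0` for large `m`.
Conversely, the words of `{p}·S^*` and `{i}·S^*` are nonempty, so the diagonal entries of powers
of their images are weights of circuits of `P ⊕ I`.
-/

open Computability

local notation "𝒮" => SL (Singleton.singleton [true] : Language Bool)
  (Singleton.singleton [false] : Language Bool)

theorem EReal.add_iSup {ι : Sort*} (x : EReal) (g : ι → EReal) :
    x + ⨆ i, g i = ⨆ i, x + g i := by
  refine le_antisymm (EReal.add_le_of_forall_lt fun a ha b hb => ?_)
    (iSup_le fun i => add_le_add_right (le_iSup g i) x)
  obtain ⟨i, hi⟩ := lt_iSup_iff.1 hb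
  exact (add_le_add ha.le hi.le).trans (le_iSup (fun i => x + g i) i)

theorem EReal.iSup_add {ι : Sort*} (x : EReal) (g : ι → EReal) :
    (⨆ i, g i) + x = ⨆ i, g i + x := by
  simp only [add_comm _ x, EReal.add_iSup]

theorem EReal.exists_pos_add_nsmul {a b : EReal} (ha : a ≠ ⊥) (hb : 0 < b) :
    ∃ m : ℕ, 0 < a + m • b := by
  induction a using EReal.rec with
  | bot => exact absurd rfl ha
  | top => exact ⟨0, by simp⟩
  | coe r =>
    induction b using EReal.rec with
    | bot => simp at hb
    | top => exact ⟨1, by simp⟩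
    | coe s =>
      have hs : 0 < s := EReal.coe_pos.1 hb
      obtain ⟨m, hm⟩ := exists_nat_gt (-r / s)
      refine ⟨m, ?_⟩
      rw [← EReal.coe_nsmul, ← EReal.coe_add, EReal.coe_pos, nsmul_eq_mul]
      rw [div_lt_iff₀ hs] at hm
      linarith

section MaxPlus

variable {n : ℕ}

theorem mpId_mul (A : MPMat n) : mpMul mpId A = A := by
  funext i j
  refine le_antisymm (iSup_le fun k => ?_) (le_iSup_of_le i (by simp [mpId]))
  by_cases h : i = k
  · subst h; simp [mpId]
  · simp [mpId, h]

theorem mpMul_assoc (A B C : MPMat n) : mpMul (mpMul A B) C = mpMul A (mpMul B C) := by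
  funext i j
  simp only [mpMul, EReal.iSup_add, EReal.add_iSup, add_assoc]
  exact iSup_comm

theorem mpMul_mono {A A' B B' : MPMat n} (hA : ∀ i j, A i j ≤ A' i j)
    (hB : ∀ i j, B i j ≤ B' i j) (i j : Fin n) : mpMul A B i j ≤ mpMul A' B' i j :=
  iSup_mono fun k => add_le_add (hA i k) (hB k j)

variable {α : Type*}

theorem wordMat_append (f : α → MPMat n) (s t : List α) :
    wordMat f (s ++ t) = mpMul (wordMat f s) (wordMat f t) := by
  induction s with
  | nil => exact (mpId_mul _).symm
  | cons z s ih => simp only [List.cons_append, wordMat, ih, mpMul_assoc]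

theorem wordMat_le_langMat (f : α → MPMat n) {L : Language α} {s : List α} (hs : s ∈ L)
    (i j : Fin n) : wordMat f s i j ≤ langMat f L i j :=
  le_iSup₂_of_le s hs le_rfl

theorem langMat_one (f : α → MPMat n) : langMat f 1 = mpId := by
  funext i j
  refine le_antisymm (iSup₂_le fun s hs => ?_) (wordMat_le_langMat f Language.nil_mem_one i j)
  rw [(Language.mem_one s).1 hs]
  rfl

theorem langMat_mul (f : α → MPMat n) (L₁ L₂ : Language α) :
    langMat f (L₁ * L₂) = mpMul (langMat f L₁) (langMat f L₂) := by
  funext i j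
  refine le_antisymm (iSup₂_le fun u hu => ?_) (iSup_le fun k => ?_)
  · obtain ⟨s, hs, t, ht, rfl⟩ := Language.mem_mul.1 hu
    rw [wordMat_append]
    exact mpMul_mono (fun i k => wordMat_le_langMat f hs i k)
      (fun k j => wordMat_le_langMat f ht k j) i j
  · simp only [langMat, EReal.iSup_add, EReal.add_iSup]
    refine iSup₂_le fun t ht => iSup₂_le fun s hs => ?_
    calc wordMat f s i k + wordMat f t k j ≤ wordMat f (s ++ t) i j := by
          rw [wordMat_append]; exact le_iSup (fun k => wordMat f s i k + wordMat f t k j) k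
      _ ≤ _ := wordMat_le_langMat f (Language.append_mem_mul hs ht) i j

theorem langMat_pow (f : α → MPMat n) (L : Language α) (m : ℕ) :
    mpPow (langMat f L) m = langMat f (L ^ m) := by
  induction m with
  | zero => rw [pow_zero, langMat_one]; rfl
  | succ m ih => rw [pow_succ', langMat_mul, ← ih]; rfl

theorem wordMat_le_mpPow {f : α → MPMat n} {A : MPMat n} (hf : ∀ a i j, f a i j ≤ A i j)
    (u : List α) (i j : Fin n) : wordMat f u i j ≤ mpPow A u.length i j := by
  induction u generalizing i j with
  | nil => exact le_rfl
  | cons a u ih => exact mpMul_mono (hf a) ih i j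

theorem inGamma_langMat {f : α → MPMat n} {A : MPMat n} (hf : ∀ a i j, f a i j ≤ A i j)
    (hA : InGamma A) {L : Language α} (hL : [] ∉ L) : InGamma (langMat f L) := by
  intro i m hm
  rw [langMat_pow]
  refine iSup₂_le fun u hu => (wordMat_le_mpPow hf u i i).trans (hA i _ ?_)
  obtain ⟨m, rfl⟩ := Nat.exists_eq_add_of_le' hm
  obtain ⟨s, -, t, ht, rfl⟩ := Language.mem_mul.1 (pow_succ L m ▸ hu)
  have := List.length_pos_iff.2 (ne_of_mem_of_not_mem ht hL)
  rw [List.length_append]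
  omega

end MaxPlus

section Paths

variable {n : ℕ} {α : Type*}

/-- A path from `j` is encoded by its list of steps `(a, v)`, each an arc to `v` carrying
the letter `a`. -/
noncomputable def pathWeight (f : α → MPMat n) : Fin n → List (α × Fin n) → EReal
  | _, [] => 0
  | j, (a, v) :: l => f a j v + pathWeight f v l

def pathEnd : Fin n → List (α × Fin n) → Fin n
  | j, [] => j
  | _, (_, v) :: l => pathEnd v l

theorem pathEnd_append (j : Fin n) (l₁ l₂ : List (α × Fin n)) :
    pathEnd j (l₁ ++ l₂) = pathEnd (pathEnd j l₁) l₂ := by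
  induction l₁ generalizing j with
  | nil => rfl
  | cons s l ih => exact ih s.2

theorem pathWeight_append (f : α → MPMat n) (j : Fin n) (l₁ l₂ : List (α × Fin n)) :
    pathWeight f j (l₁ ++ l₂) = pathWeight f j l₁ + pathWeight f (pathEnd j l₁) l₂ := by
  induction l₁ generalizing j with
  | nil => exact (zero_add _).symm
  | cons s l ih => simp only [List.cons_append, pathWeight, pathEnd, ih, add_assoc]

theorem pathWeight_le_wordMat (f : α → MPMat n) (j : Fin n) (l : List (α × Fin n)) :
    pathWeight f j l ≤ wordMat f (l.map Prod.fst) j (pathEnd j l) := by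
  induction l generalizing j with
  | nil => simp [pathWeight, wordMat, mpId, pathEnd]
  | cons s l ih =>
    exact (add_le_add_right (ih s.2) _).trans
      (le_iSup (fun k => f s.1 j k + wordMat f (l.map Prod.fst) k (pathEnd s.2 l)) s.2)

theorem mpPow_le_iSup_pathWeight {f : α → MPMat n} {A : MPMat n}
    (hA : ∀ i j, ∃ a, A i j = f a i j) (k : ℕ) (i j : Fin n) :
    mpPow A k i j ≤ ⨆ (l : List (α × Fin n)) (_ : pathEnd i l = j), pathWeight f i l := by
  induction k generalizing i with
  | zero =>
    by_cases h : i = j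
    · subst h
      exact le_iSup₂_of_le [] rfl (by simp [mpPow, mpId, pathWeight])
    · simp [mpPow, mpId, h]
  | succ k ih =>
    refine iSup_le fun v => ?_
    obtain ⟨a, ha⟩ := hA i v
    calc A i v + mpPow A k v j
        ≤ f a i v + ⨆ (l : List (α × Fin n)) (_ : pathEnd v l = j), pathWeight f v l :=
          add_le_add ha.le (ih v)
      _ = ⨆ (l : List (α × Fin n)) (_ : pathEnd v l = j), f a i v + pathWeight f v l := by
          simp only [EReal.add_iSup]
      _ ≤ _ := iSup₂_le fun l hl => le_iSup₂_of_le ((a, v) :: l) hl le_rfl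

section Circuits

variable {j : Fin n} {l₁ l₂ : List (α × Fin n)}

theorem pathEnd_rotate (h : pathEnd j (l₁ ++ l₂) = j) :
    pathEnd (pathEnd j l₁) (l₂ ++ l₁) = pathEnd j l₁ := by
  rw [pathEnd_append, ← pathEnd_append j l₁ l₂, h]

theorem pathWeight_rotate (f : α → MPMat n) (h : pathEnd j (l₁ ++ l₂) = j) :
    pathWeight f (pathEnd j l₁) (l₂ ++ l₁) = pathWeight f j (l₁ ++ l₂) := by
  rw [pathWeight_append, pathWeight_append, ← pathEnd_append j l₁ l₂, h, add_comm]

theorem pathEnd_flatten_replicate {l : List (α × Fin n)} (h : pathEnd j l = j) (m : ℕ) :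
    pathEnd j (List.replicate m l).flatten = j := by
  induction m with
  | zero => rfl
  | succ m ih => rw [List.replicate_succ, List.flatten_cons, pathEnd_append, h, ih]

theorem pathWeight_flatten_replicate (f : α → MPMat n) {l : List (α × Fin n)}
    (h : pathEnd j l = j) (m : ℕ) :
    pathWeight f j (List.replicate m l).flatten = m • pathWeight f j l := by
  induction m with
  | zero => exact (zero_nsmul _).symm
  | succ m ih =>
    rw [List.replicate_succ, List.flatten_cons, pathWeight_append, h, ih, succ_nsmul']

theorem exists_cycle_of_length_lt {l : List (α × Fin n)} (hl : n < l.length) (j : Fin n) :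
    ∃ l₁ l₂ l₃, l = l₁ ++ l₂ ++ l₃ ∧ l₂ ≠ [] ∧ l₃ ≠ [] ∧
      pathEnd (pathEnd j l₁) l₂ = pathEnd j l₁ := by
  obtain ⟨t₁, t₂, hlt, heq⟩ : ∃ t₁ t₂ : Fin l.length, t₁ < t₂ ∧
      pathEnd j (l.take t₁) = pathEnd j (l.take t₂) := by
    obtain ⟨a, b, hab, heq⟩ := Fintype.exists_ne_map_eq_of_card_lt
      (fun t : Fin l.length => pathEnd j (l.take t)) (by simpa using hl)
    rcases lt_or_gt_of_ne hab with h | h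
    · exact ⟨a, b, h, heq⟩
    · exact ⟨b, a, h, heq.symm⟩
  have htake : l.take t₁ ++ (l.drop t₁).take (t₂ - t₁) = l.take t₂ := by
    rw [← List.take_add]
    congr 1
    omega
  refine ⟨l.take t₁, (l.drop t₁).take (t₂ - t₁), l.drop t₂, ?_, ?_, ?_, ?_⟩
  · rw [htake, List.take_append_drop]
  · rw [← List.length_pos_iff, List.length_take, List.length_drop]
    omega
  · rw [← List.length_pos_iff, List.length_drop]
    omega
  · rw [← pathEnd_append, htake, heq]

theorem pathWeight_nonpos_of_forall_length_le {f : α → MPMat n}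
    (hshort : ∀ j (l : List (α × Fin n)), l.length ≤ n → pathEnd j l = j →
      pathWeight f j l ≤ 0) (j : Fin n) (l : List (α × Fin n)) (hl : pathEnd j l = j) :
    pathWeight f j l ≤ 0 := by
  induction hk : l.length using Nat.strong_induction_on generalizing j l with
  | _ k ih =>
  by_cases hn : l.length ≤ n
  · exact hshort j l hn hl
  obtain ⟨l₁, l₂, l₃, rfl, h₂, h₃, hcyc⟩ := exists_cycle_of_length_lt (not_le.1 hn) j
  have hlen₂ := List.length_pos_iff.2 h₂
  have hlen₃ := List.length_pos_iff.2 h₃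
  simp only [List.length_append] at hk
  have hrest : pathEnd j (l₁ ++ l₃) = j := by
    rw [pathEnd_append, ← hcyc, ← pathEnd_append, ← pathEnd_append, ← List.append_assoc, hl]
  calc pathWeight f j (l₁ ++ l₂ ++ l₃)
      = pathWeight f (pathEnd j l₁) l₂ + pathWeight f j (l₁ ++ l₃) := by
        rw [pathWeight_append, pathWeight_append, pathEnd_append, hcyc, pathWeight_append]
        abel
    _ ≤ 0 := add_nonpos (ih _ (by omega) _ _ hcyc rfl)
        (ih _ (by simp; omega) _ _ hrest rfl)

end Circuits

end Paths

section Words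

def excess (x : Bool) (w : List Bool) : ℤ := w.count x - w.count (!x)

variable {x : Bool}

@[simp] theorem excess_nil : excess x [] = 0 := by simp [excess]

theorem excess_append (u v : List Bool) : excess x (u ++ v) = excess x u + excess x v := by
  simp only [excess, List.count_append]
  push_cast
  ring

@[simp] theorem excess_cons_self (w : List Bool) : excess x (x :: w) = excess x w + 1 := by
  rw [← List.singleton_append, excess_append, add_comm]
  cases x <;> rfl

@[simp] theorem excess_cons_not (w : List Bool) : excess x ((!x) :: w) = excess x w - 1 := by
  rw [← List.singleton_append, excess_append, add_comm, sub_eq_add_neg]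
  cases x <;> rfl

theorem excess_not (w : List Bool) : excess (!x) w = -excess x w := by
  simp only [excess, Bool.not_not]
  ring

theorem excess_eq_zero_iff {y : Bool} {w : List Bool} : excess x w = 0 ↔ excess y w = 0 := by
  cases x <;> cases y <;> simp [excess, sub_eq_zero, eq_comm]

/-- Locates the first step at which the running excess, started at `a`, drops below `0`. -/
theorem exists_first_descent (Z : List Bool) {a : ℤ} (ha : 0 ≤ a) (h : a + excess x Z < 0) :
    ∃ u v, Z = u ++ (!x) :: v ∧ a + excess x u = 0 ∧ (u = [] ∨ ∃ u', u = u' ++ [!x]) := by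
  induction Z generalizing a with
  | nil => rw [excess_nil] at h; omega
  | cons b Z ih =>
    obtain rfl | rfl := (Bool.eq_or_eq_not b x).imp Eq.symm Eq.symm
    · rw [excess_cons_self] at h
      obtain ⟨u, v, rfl, hu, hlast⟩ := ih (a := a + 1) (by omega) (by omega)
      refine ⟨x :: u, v, rfl, by rw [excess_cons_self]; omega, Or.inr ?_⟩
      rcases hlast with rfl | ⟨u', rfl⟩
      · rw [excess_nil] at hu; omega
      · exact ⟨x :: u', rfl⟩
    · rw [excess_cons_not] at h
      by_cases ha0 : a = 0
      · exact ⟨[], Z, rfl, by simp [ha0], Or.inl rfl⟩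
      obtain ⟨u, v, rfl, hu, hlast⟩ := ih (a := a - 1) (by omega) (by omega)
      refine ⟨(!x) :: u, v, rfl, by rw [excess_cons_not]; omega, Or.inr ?_⟩
      rcases hlast with rfl | ⟨u', rfl⟩
      · exact ⟨[], rfl⟩
      · exact ⟨(!x) :: u', rfl⟩

theorem exists_balanced_descent {Z : List Bool} (h : excess x Z = -2) :
    ∃ u v, Z = u ++ (!x) :: (!x) :: v ∧ excess x u = 0 := by
  obtain ⟨u, v, rfl, hu, hlast⟩ := exists_first_descent (x := x) Z (a := 1) zero_le_one (by omega)
  rcases hlast with rfl | ⟨u', rfl⟩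
  · simp at hu
  · refine ⟨u', v, by simp, ?_⟩
    rw [excess_append, ← List.singleton_append, excess_append, excess_cons_not, excess_nil] at hu
    omega

theorem nil_mem_S (d : ℕ) : [] ∈ 𝒮 d := by
  cases d with
  | zero => exact Language.nil_mem_one
  | succ d => exact (Language.mem_add _ _ _).2 (Or.inr Language.nil_mem_one)

theorem S_mono : Monotone 𝒮 := by
  refine monotone_nat_of_le_succ fun d => ?_
  induction d with
  | zero => exact le_add_self
  | succ d ih =>
    show _ * _ * _ * _ + _ * _ * _ * _ + 1 ≤ _ * _ * _ * _ + _ * _ * _ * _ + 1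
    gcongr

theorem cons_append_not_mem_S {d : ℕ} {s s' : List Bool} (hs : s ∈ 𝒮 d) (hs' : s' ∈ 𝒮 d) :
    x :: (s ++ s') ++ [!x] ∈ 𝒮 (d + 1) := by
  have hmem : x :: (s ++ s') ++ [!x] ∈ {[x]} * 𝒮 d * 𝒮 d * {[!x]} := by
    simpa using Language.append_mem_mul (Language.append_mem_mul
      (Language.append_mem_mul (show [x] ∈ ({[x]} : Language Bool) from rfl) hs) hs')
      (show [!x] ∈ ({[!x]} : Language Bool) from rfl)
  cases x
  · exact (Language.mem_add _ _ _).2 (Or.inl ((Language.mem_add _ _ _).2 (Or.inr hmem)))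
  · exact (Language.mem_add _ _ _).2 (Or.inl ((Language.mem_add _ _ _).2 (Or.inl hmem)))

theorem exists_append_mem_S (w : List Bool) (hw : excess true w = 0) :
    ∃ s s', w = s ++ s' ∧ s ∈ 𝒮 (w.length / 2) ∧ s' ∈ 𝒮 (w.length / 2) := by
  induction hk : w.length using Nat.strong_induction_on generalizing w with
  | _ k ih =>
  subst hk
  have hwrap : ∀ (y : Bool) (Z : List Bool), Z.length + 2 ≤ w.length → excess y Z = 0 →
      y :: Z ++ [!y] ∈ 𝒮 (w.length / 2) := by
    intro y Z hZ h0
    obtain ⟨s, s', rfl, hs, hs'⟩ := ih _ (by omega) _ (excess_eq_zero_iff.1 h0) rfl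
    exact S_mono (by omega) (cons_append_not_mem_S hs hs')
  rcases w with _ | ⟨y, w⟩
  · exact ⟨[], [], rfl, nil_mem_S _, nil_mem_S _⟩
  rw [excess_eq_zero_iff (y := y)] at hw
  obtain rfl | ⟨Z, z, rfl⟩ := w.eq_nil_or_concat'
  · simp at hw
  obtain rfl | rfl := (Bool.eq_or_eq_not z y).imp Eq.symm Eq.symm
  · -- cut `w = y Z y` inside the first descent of the running excess below `0`
    obtain ⟨u, v, rfl, hu⟩ := exists_balanced_descent (x := y) (Z := Z) (by
      rw [excess_cons_self, excess_append, excess_cons_self, excess_nil] at hw; omega)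
    have hv : excess (!y) v = 0 := by
      simp only [excess_cons_self, excess_append, excess_cons_not, excess_nil] at hw
      rw [excess_not]
      omega
    refine ⟨y :: u ++ [!y], (!y) :: v ++ [!!y], by simp, hwrap y u (by simp) hu,
      hwrap (!y) v (by simp; omega) hv⟩
  · refine ⟨y :: Z ++ [!y], [], by simp, hwrap y Z (by simp) ?_, nil_mem_S _⟩
    rw [excess_cons_self, excess_append, excess_cons_not, excess_nil] at hw
    omega

theorem mem_kstar_S {n : ℕ} {w : List Bool} (hw : excess x w = 0) (hlen : w.length ≤ n) :
    w ∈ (𝒮 (n / 2))∗ := by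
  obtain ⟨s, s', rfl, hs, hs'⟩ := exists_append_mem_S w (excess_eq_zero_iff.1 hw)
  have hmono := S_mono (Nat.div_le_div_right (c := 2) hlen)
  rw [← kstar_mul_kstar]
  exact Language.append_mem_mul (le_kstar (a := 𝒮 (n / 2)) (hmono hs))
    (le_kstar (a := 𝒮 (n / 2)) (hmono hs'))

def PosPrefixes (x : Bool) (v : List Bool) : Prop :=
  ∀ u, u <+: v → u ≠ [] → 0 < excess x u

theorem posPrefixes_nil : PosPrefixes x [] :=
  fun _ hu hne => (hne (List.prefix_nil.1 hu)).elim

/-- Cut `w` after the last of its prefixes of minimal excess. -/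
theorem exists_minPrefix_append_posPrefixes (w : List Bool) :
    ∃ A B, w = A ++ B ∧ (∀ u, u <+: w → excess x A ≤ excess x u) ∧ PosPrefixes x B := by
  induction w using List.reverseRecOn with
  | nil => exact ⟨[], [], rfl, fun u hu => by rw [List.prefix_nil.1 hu], posPrefixes_nil⟩
  | append_singleton w b ih =>
    obtain ⟨A, B, rfl, hmin, hpos⟩ := ih
    by_cases hle : excess x (A ++ B ++ [b]) ≤ excess x A
    · refine ⟨A ++ B ++ [b], [], (List.append_nil _).symm, fun u hu => ?_, posPrefixes_nil⟩
      rcases List.prefix_concat_iff.1 hu with rfl | hu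
      · exact le_rfl
      · exact hle.trans (hmin u hu)
    · refine ⟨A, B ++ [b], by simp, fun u hu => ?_, fun u hu hne => ?_⟩
      · rcases List.prefix_concat_iff.1 hu with rfl | hu
        · exact (not_le.1 hle).le
        · exact hmin u hu
      · rcases List.prefix_concat_iff.1 hu with rfl | hu
        · rw [List.append_assoc, excess_append] at hle
          omega
        · exact hpos u hu hne

theorem exists_rotation_posPrefixes {w : List Bool} (h : 0 < excess x w) :
    ∃ A B, w = A ++ B ∧ PosPrefixes x (B ++ A) := by
  obtain ⟨A, B, rfl, hmin, hpos⟩ := exists_minPrefix_append_posPrefixes (x := x) w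
  refine ⟨A, B, rfl, fun u ⟨r, hr⟩ hne => ?_⟩
  rcases List.append_eq_append_iff.1 hr with ⟨a, rfl, -⟩ | ⟨c, rfl, rfl⟩
  · exact hpos u (List.prefix_append u a) hne
  · have := hmin c (List.prefix_append_of_prefix (List.prefix_append c r))
    rw [excess_append] at h ⊢
    omega

theorem mem_pow_of_posPrefixes {n : ℕ} :
    ∀ (m : ℕ) {v : List Bool}, PosPrefixes x v → excess x v = m → v.length ≤ n →
      v ∈ ({[x]} * (𝒮 (n / 2))∗) ^ m
  | 0, v, hv, hm, _ => by
    obtain rfl : v = [] := by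
      by_contra hne
      exact (hv v List.prefix_rfl hne).ne' (by exact_mod_cast hm)
    exact Language.nil_mem_one
  | m + 1, [], _, hm, _ => by rw [excess_nil] at hm; omega
  | m + 1, b :: v, hv, hm, hlen => by
    have hb := hv [b] (List.prefix_append [b] v) (List.cons_ne_nil _ _)
    obtain rfl | rfl := (Bool.eq_or_eq_not b x).imp Eq.symm Eq.symm
    · obtain ⟨B, R, rfl, hmin, hR⟩ := exists_minPrefix_append_posPrefixes (x := x) v
      have hB : excess x B = 0 := by
        have h₁ := hmin [] List.nil_prefix
        have h₂ := hv (x :: B) (List.prefix_append (x :: B) R) (List.cons_ne_nil _ _)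
        simp only [excess_nil, excess_cons_self] at h₁ h₂
        omega
      simp only [List.length_cons, List.length_append] at hlen
      simp only [excess_cons_self, excess_append, hB] at hm
      rw [pow_succ']
      exact Language.append_mem_mul (a := [x] ++ B)
        (Language.append_mem_mul (show [x] ∈ ({[x]} : Language Bool) from rfl)
          (mem_kstar_S (n := n) hB (by omega)))
        (mem_pow_of_posPrefixes m hR (by omega) (by omega))
    · simp at hb

theorem flatten_replicate_mem_kstar {α : Type*} {L : Language α} {w : List α} (hw : w ∈ L∗)
    (m : ℕ) : (List.replicate m w).flatten ∈ L∗ := by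
  rw [← kstar_idem]
  exact Language.join_mem_kstar fun y hy => List.eq_of_mem_replicate hy ▸ hw

end Words

section ShortCircuits

variable {n : ℕ} {f : Bool → MPMat n} {j : Fin n} {l : List (Bool × Fin n)}

theorem pathWeight_nonpos_of_mem_pow {L : Language Bool} (hL : InGamma (langMat f L)) {m : ℕ}
    (hm : 1 ≤ m) (hmem : l.map Prod.fst ∈ L ^ m) (hl : pathEnd j l = j) :
    pathWeight f j l ≤ 0 :=
  calc pathWeight f j l ≤ wordMat f (l.map Prod.fst) j j := by
        simpa only [hl] using pathWeight_le_wordMat f j l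
    _ ≤ langMat f (L ^ m) j j := wordMat_le_langMat f hmem j j
    _ = mpPow (langMat f L) m j j := by rw [langMat_pow]
    _ ≤ 0 := hL j m hm

theorem pathWeight_nonpos_of_excess_pos {x : Bool}
    (hL : InGamma (langMat f ({[x]} * (𝒮 (n / 2))∗))) (hl : pathEnd j l = j)
    (hlen : l.length ≤ n) (hx : 0 < excess x (l.map Prod.fst)) : pathWeight f j l ≤ 0 := by
  obtain ⟨A, B, hAB, hpos⟩ := exists_rotation_posPrefixes hx
  obtain ⟨l₁, l₂, rfl, rfl, rfl⟩ := List.map_eq_append_iff.1 hAB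
  rw [List.map_append, excess_append] at hx
  rw [← pathWeight_rotate f hl]
  refine pathWeight_nonpos_of_mem_pow hL (m := (excess x (l₁.map Prod.fst) +
    excess x (l₂.map Prod.fst)).toNat) (by omega) ?_ (pathEnd_rotate hl)
  rw [List.map_append]
  refine mem_pow_of_posPrefixes _ hpos ?_ (by simpa [add_comm] using hlen)
  rw [excess_append, add_comm]
  omega

theorem pathWeight_nonpos_of_excess_eq_zero
    (hL : InGamma (langMat f ({[true]} * (𝒮 (n / 2))∗))) (hjj : f true j j ≠ ⊥)
    (hl : pathEnd j l = j) (hlen : l.length ≤ n) (h0 : excess true (l.map Prod.fst) = 0) :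
    pathWeight f j l ≤ 0 := by
  by_contra! hpos
  obtain ⟨m, hm⟩ := EReal.exists_pos_add_nsmul hjj hpos
  have hloop : pathWeight f j ((true, j) :: (List.replicate m l).flatten) ≤ 0 := by
    refine pathWeight_nonpos_of_mem_pow hL le_rfl ?_ (pathEnd_flatten_replicate hl m)
    rw [pow_one, List.map_cons, List.map_flatten, List.map_replicate]
    exact Language.append_mem_mul (a := [true]) rfl
      (flatten_replicate_mem_kstar (mem_kstar_S h0 (by simpa using hlen)) m)
  rw [pathWeight, pathWeight_flatten_replicate f hl] at hloop
  exact hm.not_ge hloop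

theorem pathWeight_nonpos_of_inGamma
    (hT : InGamma (langMat f ({[true]} * (𝒮 (n / 2))∗)))
    (hF : InGamma (langMat f ({[false]} * (𝒮 (n / 2))∗))) (hjj : ∀ j, f true j j ≠ ⊥)
    (j : Fin n) (l : List (Bool × Fin n)) (hlen : l.length ≤ n) (hl : pathEnd j l = j) :
    pathWeight f j l ≤ 0 := by
  rcases lt_trichotomy (excess true (l.map Prod.fst)) 0 with h | h | h
  · refine pathWeight_nonpos_of_excess_pos hF hl hlen ?_
    rw [← Bool.not_true, excess_not]
    omega
  · exact pathWeight_nonpos_of_excess_eq_zero hT (hjj j) hl hlen h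
  · exact pathWeight_nonpos_of_excess_pos hT hl hlen h

end ShortCircuits

theorem stmt16_general {n : ℕ} (P I : MPMat n)
    (hPd : ∀ j, P j j ≠ ⊥) :
    InGamma (mpAdd P I) ↔
      (InGamma (langMat (mu2 P I)
        (({[true]} : Language Bool) *
          KStar.kstar (SL ({[true]} : Language Bool) ({[false]} : Language Bool) (n / 2)))) ∧
       InGamma (langMat (mu2 P I)
        (({[false]} : Language Bool) *
          KStar.kstar (SL ({[true]} : Language Bool) ({[false]} : Language Bool) (n / 2))))) := by
  constructor
  · intro h
    have hf : ∀ b i j, mu2 P I b i j ≤ mpAdd P I i j := fun b i j => by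
      cases b
      exacts [le_max_right _ _, le_max_left _ _]
    have hL : ∀ x : Bool, [] ∉ ({[x]} : Language Bool) * (𝒮 (n / 2))∗ := by
      intro x hx
      obtain ⟨a, ha, b, -, hab⟩ := Language.mem_mul.1 hx
      rw [Set.mem_singleton_iff.1 ha] at hab
      simp at hab
    exact ⟨inGamma_langMat hf h (hL true), inGamma_langMat hf h (hL false)⟩
  · rintro ⟨hT, hF⟩ i k -
    have hA : ∀ i j, ∃ b, mpAdd P I i j = mu2 P I b i j := fun i j =>
      (max_choice (P i j) (I i j)).elim (fun h => ⟨true, h⟩) (fun h => ⟨false, h⟩)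
    exact (mpPow_le_iSup_pathWeight hA k i i).trans <| iSup₂_le fun l hl =>
      pathWeight_nonpos_of_forall_length_le (pathWeight_nonpos_of_inGamma hT hF hPd) i l hl

/-- with `S = S({p}, {i}, ⌊n/2⌋)`,
`G(P ⊕ I) ∈ Γ ↔ (G(μ({p}·S^*)) ∈ Γ ∧ G(μ({i}·S^*)) ∈ Γ)`. -/
theorem stmt16 {n : ℕ} (P I : MPMat n)
    (hP : ∀ i j, P i j ≠ ⊤) (hI : ∀ i j, I i j ≠ ⊤)
    (hPd : ∀ j, P j j ≠ ⊥) :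
    InGamma (mpAdd P I) ↔
      (InGamma (langMat (mu2 P I)
        (({[true]} : Language Bool) *
          KStar.kstar (SL ({[true]} : Language Bool) ({[false]} : Language Bool) (n / 2)))) ∧
       InGamma (langMat (mu2 P I)
        (({[false]} : Language Bool) *
          KStar.kstar (SL ({[true]} : Language Bool) ({[false]} : Language Bool) (n / 2))))) :=
  stmt16_general P I hPd

end NCP
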